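/- Let x : ℕ → ℝ be a real sequence (indexed from 1). The series Σ_{i=1}^∞ x_i converges to a finite limit if and only if there exists a nonnegative sequence (c_j)_{j≥1} with c_j → 0 such that for every sequence of block sizes n : ℕ → ℕ with n_j ≥ 1 for all j, there exists J such that |S_j| ≤ c_j for all j ≥ J, where S_j is the j-th block sum determined by the block sizes n. -/

import Mathlib

open Filter Finset

/-- Cumulative block endpoints: `N n j = n 1 + ⋯ + n j`, with `N n 0 = 0`. -/
noncomputable def blockEnd (n : ℕ → ℕ) (j : ℕ) : ℕ := ∑ k ∈ Finset.Icc 1 j, n k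

/-- The `j`-th block sum `S j = ∑_{i = N_{j-1}+1}^{N_j} x i`. -/
noncomputable def blockSum (x : ℕ → ℝ) (n : ℕ → ℕ) (j : ℕ) : ℝ :=
  ∑ i ∈ Finset.Ioc (blockEnd n (j - 1)) (blockEnd n j), x i

/-!
Both conditions say that the partial sums `P m = x 1 + ⋯ + x m` form a Cauchy sequence. Every block
sum is an increment `P (N j) - P (N (j - 1))` between indices `≥ j - 1`, so the Cauchy modulus of
`P`, shifted by one, bounds all block sums of all partitions at once. Conversely, if `P` is not
Cauchy, there are `ε > 0` and, beyond every `N`, an index `m` with `|P m - P N| ≥ ε`; iterating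
this choice from `0` gives block endpoints whose block sums all have absolute value `≥ ε`, which
no `c j → 0` can bound.
-/

theorem Finset.sum_Ioc_eq_sum_Icc_one_sub {M : Type*} [AddCommGroup M] (f : ℕ → M) {a b : ℕ}
    (hab : a ≤ b) : ∑ i ∈ Ioc a b, f i = ∑ i ∈ Icc 1 b, f i - ∑ i ∈ Icc 1 a, f i := by
  rw [← zero_add 1, Icc_add_one_left_eq_Ioc, Icc_add_one_left_eq_Ioc,
    ← sum_Ioc_consecutive f (Nat.zero_le a) hab, add_sub_cancel_left]

theorem Metric.exists_strictMono_forall_le_dist_of_not_cauchySeq {α : Type*} [PseudoMetricSpace α]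
    {u : ℕ → α} (hu : ¬CauchySeq u) :
    ∃ ε > 0, ∃ e : ℕ → ℕ, e 0 = 0 ∧ StrictMono e ∧ ∀ j, ε ≤ dist (u (e (j + 1))) (u (e j)) := by
  rw [Metric.cauchySeq_iff'] at hu
  push Not at hu
  obtain ⟨ε, hε, hfar⟩ := hu
  choose f hf_ge hf_dist using hfar
  have hf_lt : ∀ N, N < f N := fun N => (hf_ge N).lt_of_ne fun hN =>
    (hf_dist N).not_gt (by rwa [← hN, dist_self])
  refine ⟨ε, hε, fun j => f^[j] 0, rfl, strictMono_nat_of_lt_succ fun j => ?_, fun j => ?_⟩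
  · rw [Function.iterate_succ_apply']
    exact hf_lt _
  · dsimp only
    rw [Function.iterate_succ_apply']
    exact hf_dist _

theorem blockEnd_zero (n : ℕ → ℕ) : blockEnd n 0 = 0 := by
  simp [blockEnd]

theorem blockEnd_succ (n : ℕ → ℕ) (j : ℕ) : blockEnd n (j + 1) = blockEnd n j + n (j + 1) :=
  sum_Icc_succ_top (by omega) n

theorem blockEnd_mono (n : ℕ → ℕ) : Monotone (blockEnd n) :=
  monotone_nat_of_le_succ fun j => by rw [blockEnd_succ]; omega

theorem blockEnd_strictMono {n : ℕ → ℕ} (hn : ∀ j, 1 ≤ n j) : StrictMono (blockEnd n) :=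
  strictMono_nat_of_lt_succ fun j => by rw [blockEnd_succ]; have := hn (j + 1); omega

theorem exists_blockEnd_eq {e : ℕ → ℕ} (he₀ : e 0 = 0) (he : StrictMono e) :
    ∃ n : ℕ → ℕ, (∀ j, 1 ≤ n j) ∧ blockEnd n = e := by
  refine ⟨fun | 0 => 1 | j + 1 => e (j + 1) - e j, ?_, funext fun j => ?_⟩
  · rintro (_ | j)
    · exact le_rfl
    · have := he (lt_add_one j)
      dsimp only
      omega
  · induction j with
    | zero => rw [blockEnd_zero, he₀]
    | succ j ih =>
      have := he (lt_add_one j)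
      rw [blockEnd_succ, ih]
      dsimp only
      omega

theorem blockSum_eq_sub (x : ℕ → ℝ) (n : ℕ → ℕ) (j : ℕ) :
    blockSum x n j =
      ∑ i ∈ Icc 1 (blockEnd n j), x i - ∑ i ∈ Icc 1 (blockEnd n (j - 1)), x i :=
  sum_Ioc_eq_sum_Icc_one_sub x (blockEnd_mono n (Nat.sub_le j 1))

theorem exists_forall_abs_blockSum_le_of_cauchySeq {x : ℕ → ℝ}
    (hx : CauchySeq fun m => ∑ i ∈ Icc 1 m, x i) :
    ∃ c : ℕ → ℝ, (∀ j, 0 ≤ c j) ∧ Tendsto c atTop (nhds 0) ∧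
      ∀ n : ℕ → ℕ, (∀ j, 1 ≤ n j) → ∀ j, |blockSum x n j| ≤ c j := by
  obtain ⟨b, hb_nonneg, hb_dist, hb_lim⟩ := cauchySeq_iff_le_tendsto_0.1 hx
  refine ⟨fun j => b (j - 1), fun j => hb_nonneg _, hb_lim.comp (tendsto_sub_atTop_nat 1),
    fun n hn j => ?_⟩
  have hle := (blockEnd_strictMono hn).id_le
  rw [blockSum_eq_sub, ← Real.dist_eq]
  exact hb_dist _ _ _ ((hle j).trans' (Nat.sub_le j 1)) (hle (j - 1))

theorem cauchySeq_of_forall_eventually_abs_blockSum_le {x : ℕ → ℝ} {c : ℕ → ℝ}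
    (hc : Tendsto c atTop (nhds 0))
    (hx : ∀ n : ℕ → ℕ, (∀ j, 1 ≤ n j) → ∃ J : ℕ, ∀ j, J ≤ j → |blockSum x n j| ≤ c j) :
    CauchySeq fun m => ∑ i ∈ Icc 1 m, x i := by
  by_contra hP
  obtain ⟨ε, hε, e, he₀, he, hfar⟩ :=
    Metric.exists_strictMono_forall_le_dist_of_not_cauchySeq hP
  obtain ⟨n, hn, rfl⟩ := exists_blockEnd_eq he₀ he
  obtain ⟨J, hJ⟩ := hx n hn
  obtain ⟨j, hcj, hJj⟩ :=
    (((hc.comp (tendsto_add_atTop_nat 1)).eventually (gt_mem_nhds hε)).and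
      (eventually_ge_atTop J)).exists
  have hbig : ε ≤ |blockSum x n (j + 1)| := by
    rw [blockSum_eq_sub, Nat.add_sub_cancel, ← Real.dist_eq]
    exact hfar j
  exact (hbig.trans (hJ (j + 1) (by omega))).not_gt hcj

/-- Deterministic backbone of the Bayesian characterization (Theorems 1 and 2,
with the relaxation of Remark 1): the series `∑_{i=1}^∞ x i` converges to a
finite limit iff there is a nonnegative sequence `c j → 0` such that, for every
choice of block sizes `n j ≥ 1`, the block sums eventually satisfy `|S j| ≤ c j`. -/
theorem convergence_iff_blockSums_eventually_bounded (x : ℕ → ℝ) :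
    (∃ L : ℝ, Tendsto (fun m => ∑ i ∈ Finset.Icc 1 m, x i) atTop (nhds L)) ↔
      ∃ c : ℕ → ℝ, (∀ j, 0 ≤ c j) ∧ Tendsto c atTop (nhds 0) ∧
        ∀ n : ℕ → ℕ, (∀ j, 1 ≤ n j) →
          ∃ J : ℕ, ∀ j, J ≤ j → |blockSum x n j| ≤ c j := by
  constructor
  · rintro ⟨L, hL⟩
    obtain ⟨c, hc_nonneg, hc_lim, hc_bound⟩ :=
      exists_forall_abs_blockSum_le_of_cauchySeq hL.cauchySeq
    exact ⟨c, hc_nonneg, hc_lim, fun n hn => ⟨0, fun j _ => hc_bound n hn j⟩⟩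
  · rintro ⟨c, -, hc_lim, hc_bound⟩
    exact cauchySeq_tendsto_of_complete
      (cauchySeq_of_forall_eventually_abs_blockSum_le hc_lim hc_bound)
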